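/- Let Ω ⊆ ℂⁿ be open, let φ : Ω → ℝ be twice continuously differentiable with −1 ≤ φ ≤ 0 on Ω, and let A : Ω → Matrix(n, n, ℂ) assign to each point a positive semidefinite Hermitian matrix. Denote by H(u) the complex Hessian matrix with entries H(u)_{jk} = ∂²u/∂z_j∂z̄_k, and by G the Hermitian matrix with entries G_{jk} = (∂φ/∂z_j)·(∂φ/∂z̄_k). If A(z) + H(φ)(z) is positive semidefinite for every z ∈ Ω, then the matrix A(z) + (1/2)·H((φ+1)²)(z) − G(z) is positive semidefinite for every z ∈ Ω; indeed it equals (φ(z)+1)·(A(z) + H(φ)(z)) − φ(z)·A(z). -/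

import Mathlib

open Complex ComplexOrder

/-- The Wirtinger derivative `∂u/∂z_j = (1/2)(∂u/∂x_j - i ∂u/∂y_j)` of a (real-differentiable)
function `u : ℂⁿ → ℂ`, expressed via the real Fréchet derivative in the directions
`e_j` and `i e_j`. -/
noncomputable def wirtingerZ {n : ℕ} (u : (Fin n → ℂ) → ℂ) (j : Fin n) (z : Fin n → ℂ) : ℂ :=
  (1 / 2 : ℂ) * (fderiv ℝ u z (Pi.single j 1) - Complex.I * fderiv ℝ u z (Pi.single j Complex.I))

/-- The conjugate Wirtinger derivative `∂u/∂z̄_j = (1/2)(∂u/∂x_j + i ∂u/∂y_j)`. -/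
noncomputable def wirtingerZbar {n : ℕ} (u : (Fin n → ℂ) → ℂ) (j : Fin n) (z : Fin n → ℂ) : ℂ :=
  (1 / 2 : ℂ) * (fderiv ℝ u z (Pi.single j 1) + Complex.I * fderiv ℝ u z (Pi.single j Complex.I))

/-- The complex Hessian matrix `H(u)_{jk} = ∂²u/∂z_j∂z̄_k` of a function `u : ℂⁿ → ℂ`. -/
noncomputable def complexHessian {n : ℕ} (u : (Fin n → ℂ) → ℂ) (z : Fin n → ℂ) :
    Matrix (Fin n) (Fin n) ℂ :=
  Matrix.of fun j k => wirtingerZ (fun w => wirtingerZbar u k w) j z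

/-!
By the Leibniz rule for Wirtinger derivatives, `H((φ+1)²) = 2(φ+1) H(φ) + 2G`, so the matrix in
question is `(φ+1)(A + H(φ)) + (-φ) A`: a combination of two positive semidefinite matrices
whose coefficients are nonnegative exactly because `-1 ≤ φ ≤ 0`.
-/

variable {n : ℕ} {u v : (Fin n → ℂ) → ℂ} {z : Fin n → ℂ}

theorem wirtingerZ_add (hu : DifferentiableAt ℝ u z) (hv : DifferentiableAt ℝ v z) (j : Fin n) :
    wirtingerZ (fun w => u w + v w) j z = wirtingerZ u j z + wirtingerZ v j z := by
  simp only [wirtingerZ, fderiv_fun_add hu hv, add_apply]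
  ring

theorem wirtingerZ_mul (hu : DifferentiableAt ℝ u z) (hv : DifferentiableAt ℝ v z) (j : Fin n) :
    wirtingerZ (fun w => u w * v w) j z = u z * wirtingerZ v j z + wirtingerZ u j z * v z := by
  simp only [wirtingerZ, fderiv_fun_mul hu hv, add_apply, smul_apply, smul_eq_mul]
  ring

theorem wirtingerZbar_mul (hu : DifferentiableAt ℝ u z) (hv : DifferentiableAt ℝ v z)
    (k : Fin n) :
    wirtingerZbar (fun w => u w * v w) k z
      = u z * wirtingerZbar v k z + wirtingerZbar u k z * v z := by
  simp only [wirtingerZbar, fderiv_fun_mul hu hv, add_apply, smul_apply, smul_eq_mul]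
  ring

theorem wirtingerZ_add_const (c : ℂ) (j : Fin n) :
    wirtingerZ (fun w => u w + c) j z = wirtingerZ u j z := by
  simp only [wirtingerZ, fderiv_add_const]

theorem wirtingerZbar_add_const (c : ℂ) (k : Fin n) :
    wirtingerZbar (fun w => u w + c) k = wirtingerZbar u k := by
  funext w
  simp only [wirtingerZbar, fderiv_add_const]

theorem Filter.EventuallyEq.wirtingerZ_eq (h : u =ᶠ[nhds z] v) (j : Fin n) :
    wirtingerZ u j z = wirtingerZ v j z := by
  simp only [wirtingerZ, h.fderiv_eq]

theorem complexHessian_add_const (c : ℂ) :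
    complexHessian (fun w => u w + c) = complexHessian u := by
  funext w
  ext j k
  simp only [complexHessian, wirtingerZbar_add_const]

theorem ContDiffAt.differentiableAt_wirtingerZbar (hu : ContDiffAt ℝ 2 u z) (k : Fin n) :
    DifferentiableAt ℝ (wirtingerZbar u k) z := by
  have hu' : DifferentiableAt ℝ (fderiv ℝ u) z :=
    (hu.fderiv_right (m := 1) le_rfl).differentiableAt one_ne_zero
  unfold wirtingerZbar
  fun_prop

theorem complexHessian_mul (hu : ContDiffAt ℝ 2 u z) (hv : ContDiffAt ℝ 2 v z) :
    complexHessian (fun w => u w * v w) z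
      = u z • complexHessian v z + v z • complexHessian u z
        + Matrix.of (fun j k => wirtingerZ u j z * wirtingerZbar v k z)
        + Matrix.of (fun j k => wirtingerZ v j z * wirtingerZbar u k z) := by
  ext j k
  have hu₁ := hu.differentiableAt two_ne_zero
  have hv₁ := hv.differentiableAt two_ne_zero
  have hu₂ := hu.differentiableAt_wirtingerZbar k
  have hv₂ := hv.differentiableAt_wirtingerZbar k
  have hleibniz : (fun w => wirtingerZbar (fun w => u w * v w) k w)
      =ᶠ[nhds z] fun w => u w * wirtingerZbar v k w + wirtingerZbar u k w * v w := by
    filter_upwards [hu.eventually (by simp), hv.eventually (by simp)] with w huw hvw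
    exact wirtingerZbar_mul (huw.differentiableAt two_ne_zero) (hvw.differentiableAt two_ne_zero) k
  simp only [complexHessian, Matrix.add_apply, Matrix.smul_apply, Matrix.of_apply, smul_eq_mul]
  rw [hleibniz.wirtingerZ_eq, wirtingerZ_add (hu₁.fun_mul hv₂) (hu₂.fun_mul hv₁),
    wirtingerZ_mul hu₁ hv₂, wirtingerZ_mul hu₂ hv₁]
  ring

theorem Matrix.PosSemidef.add_one_smul_sub_smul {m : Type*} {M A : Matrix m m ℂ}
    (hM : M.PosSemidef) (hA : A.PosSemidef) {t : ℝ} (ht : -1 ≤ t ∧ t ≤ 0) : (((t + 1 : ℝ) : ℂ) • M - (t : ℂ) • A).PosSemidef := by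
  rw [sub_eq_add_neg, ← neg_smul, ← ofReal_neg]
  exact (hM.smul (zero_le_real.mpr (by linarith [ht.1]))).add
    (hA.smul (zero_le_real.mpr (by linarith [ht.2])))

/-- Pointwise matrix form of the key inequality
`dφ ∧ d^cφ ≤ ω + (1/2) dd^c (φ+1)²` for `-1 ≤ φ ≤ 0` with `ω + dd^c φ ≥ 0`:
if `A(z) + H(φ)(z)` is positive semidefinite on `Ω`, then so is
`A(z) + (1/2) H((φ+1)²)(z) - G(z)`, where `G_{jk} = (∂φ/∂z_j)(∂φ/∂z̄_k)`; indeed the latter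
equals `(φ(z)+1)(A(z) + H(φ)(z)) - φ(z) A(z)`. -/
theorem key_matrix_inequality {n : ℕ} (Ω : Set (Fin n → ℂ)) (hΩ : IsOpen Ω)
    (φ : (Fin n → ℂ) → ℝ) (hφ : ContDiffOn ℝ 2 φ Ω)
    (hφrange : ∀ z ∈ Ω, -1 ≤ φ z ∧ φ z ≤ 0)
    (A : (Fin n → ℂ) → Matrix (Fin n) (Fin n) ℂ)
    (hA : ∀ z ∈ Ω, (A z).IsHermitian ∧ (A z).PosSemidef)
    (hAH : ∀ z ∈ Ω, (A z + complexHessian (fun v => ((φ v : ℝ) : ℂ)) z).PosSemidef) :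
    ∀ z ∈ Ω,
      (A z + ((1 / 2 : ℂ)) • complexHessian (fun v => (((φ v + 1) ^ 2 : ℝ) : ℂ)) z
          - Matrix.of (fun j k =>
              wirtingerZ (fun v => ((φ v : ℝ) : ℂ)) j z
                * wirtingerZbar (fun v => ((φ v : ℝ) : ℂ)) k z)).PosSemidef
      ∧ A z + ((1 / 2 : ℂ)) • complexHessian (fun v => (((φ v + 1) ^ 2 : ℝ) : ℂ)) z
          - Matrix.of (fun j k =>
              wirtingerZ (fun v => ((φ v : ℝ) : ℂ)) j z
                * wirtingerZbar (fun v => ((φ v : ℝ) : ℂ)) k z)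
        = ((φ z + 1 : ℝ) : ℂ) • (A z + complexHessian (fun v => ((φ v : ℝ) : ℂ)) z)
            - ((φ z : ℝ) : ℂ) • A z := by
  intro z hz
  have hu : ContDiffAt ℝ 2 (fun w => (φ w : ℂ) + 1) z :=
    (ofRealCLM.contDiff.contDiffAt.comp z (hφ.contDiffAt (hΩ.mem_nhds hz))).add contDiffAt_const
  have hsq : (fun v => (((φ v + 1) ^ 2 : ℝ) : ℂ))
      = fun w => ((φ w : ℂ) + 1) * ((φ w : ℂ) + 1) := by
    funext w
    push_cast
    ring
  refine (and_iff_right_of_imp fun key =>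
    key ▸ (hAH z hz).add_one_smul_sub_smul (hA z hz).2 (hφrange z hz)).mpr ?_
  rw [hsq, complexHessian_mul hu hu]
  simp only [complexHessian_add_const, wirtingerZ_add_const, wirtingerZbar_add_const]
  push_cast
  module
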